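/- arXiv:1306.4564 — 4 statements merged into one kernel-verified Lean document; each statement's English description precedes it below -/
import Mathlib

section
/- For even n ≥ 4, the abelianization of the Fibonacci group F(n) = ⟨x_1,…,x_n | x_i x_{i+1} = x_{i+2} (indices mod n)⟩ is a finite group of order f_{n-1} + f_{n+1} - 2. -/
/-- The relators of the Fibonacci group `F(n)`: `x_i x_{i+1} x_{i+2}⁻¹` for `i` mod `n`. -/
def fibonacciRels (n : ℕ) : Set (FreeGroup (ZMod n)) :=
  ⋃ i : ZMod n,
    {FreeGroup.of i * FreeGroup.of (i + 1) * (FreeGroup.of (i + 2))⁻¹}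

/-- The Fibonacci group `F(n) = ⟨x_1,…,x_n ∣ x_i x_{i+1} = x_{i+2}⟩`. -/
def FibonacciGroup (n : ℕ) : Type := PresentedGroup (fibonacciRels n)

instance (n : ℕ) : Group (FibonacciGroup n) :=
  inferInstanceAs (Group (PresentedGroup (fibonacciRels n)))

/-!
Write `y_i` for the image of `x_i` in the abelianization `A` of `F(n)`, written additively. The
relations say exactly that `k ↦ y_k` is an `n`-periodic Fibonacci sequence in `A`. With
`Q = !![0, 1; 1, 1]`, the universal such sequence is `k ↦ Qᵏ e₀` in `ℤ² ⧸ (Qⁿ - 1) ℤ²`, so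
`A ≅ ℤ² ⧸ (Qⁿ - 1) ℤ²` and `|A| = |det (Qⁿ - 1)|`. Since `Qⁿ = !![f_{n-1}, f_n; f_n, f_{n+1}]` and
`det Qⁿ = (-1)ⁿ`, we get `det (Qⁿ - 1) = (-1)ⁿ + 1 - (f_{n-1} + f_{n+1})`, which is
`2 - (f_{n-1} + f_{n+1})` for even `n`.
-/

open Matrix Function

theorem Matrix.natCard_quotient_range_mulVecLin {ι : Type*} [Fintype ι] [DecidableEq ι]
    (A : Matrix ι ι ℤ) (hA : A.det ≠ 0) :
    Nat.card ((ι → ℤ) ⧸ LinearMap.range A.mulVecLin) = A.det.natAbs := by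
  let e := LinearEquiv.ofInjective A.mulVecLin (mulVec_injective_of_det_ne_zero hA)
  rw [← Submodule.natAbs_det_equiv _ e, ← LinearMap.det_toLin']
  rfl

theorem Matrix.det_sub_one_fin_two {R : Type*} [CommRing R] (A : Matrix (Fin 2) (Fin 2) R) :
    (A - 1).det = A.det - A.trace + 1 := by
  simp only [det_fin_two, trace_fin_two, sub_apply, one_apply_eq, one_apply_ne, ne_eq,
    zero_ne_one, one_ne_zero, not_false_eq_true, sub_zero]
  ring

def fibMatrix : Matrix (Fin 2) (Fin 2) ℤ := !![0, 1; 1, 1]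

theorem fibMatrix_sq : fibMatrix ^ 2 = fibMatrix + 1 := by
  ext i j
  fin_cases i <;> fin_cases j <;> simp [fibMatrix, sq]

theorem fibMatrix_pow_succ (k : ℕ) :
    fibMatrix ^ (k + 1) =
      !![(Nat.fib k : ℤ), Nat.fib (k + 1); Nat.fib (k + 1), Nat.fib (k + 2)] := by
  induction k with
  | zero => simp [fibMatrix]
  | succ k ih =>
    rw [pow_succ, ih, fibMatrix, mul_fin_two]
    simp [Nat.fib_add_two]

theorem det_fibMatrix_pow_succ_sub_one (k : ℕ) :
    (fibMatrix ^ (k + 1) - 1).det = (-1) ^ (k + 1) + 1 - (Nat.fib k + Nat.fib (k + 2)) := by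
  have cassini : (fibMatrix ^ (k + 1)).det = (-1) ^ (k + 1) := by
    rw [det_pow, fibMatrix, det_fin_two_of]
    norm_num
  rw [det_sub_one_fin_two, cassini, fibMatrix_pow_succ, trace_fin_two_of]
  ring

def fibOrbit (k : ℕ) : Fin 2 → ℤ := fibMatrix ^ k *ᵥ Pi.single 0 1

theorem fibOrbit_add_two (k : ℕ) : fibOrbit (k + 2) = fibOrbit k + fibOrbit (k + 1) := by
  rw [fibOrbit, fibOrbit, fibOrbit, pow_add, fibMatrix_sq, mul_add, mul_one, pow_succ,
    add_mulVec, add_comm]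

theorem basisFun_eq_fibOrbit (j : Fin 2) : Pi.basisFun ℤ (Fin 2) j = fibOrbit j := by
  ext i
  fin_cases j <;> fin_cases i <;> simp [fibOrbit, fibMatrix]

theorem fibMatrix_pow_sub_one_mulVec_fibOrbit (n k : ℕ) :
    (fibMatrix ^ n - 1) *ᵥ fibOrbit k = fibOrbit (n + k) - fibOrbit k := by
  rw [sub_mulVec, one_mulVec, fibOrbit, fibOrbit, mulVec_mulVec, pow_add]

abbrev FibQuotient (n : ℕ) : Type :=
  (Fin 2 → ℤ) ⧸ LinearMap.range (fibMatrix ^ n - 1).mulVecLin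

namespace FibQuotient

variable (n : ℕ)

def orbit (k : ℕ) : FibQuotient n := Submodule.mkQ _ (fibOrbit k)

theorem orbit_add_two (k : ℕ) : orbit n (k + 2) = orbit n k + orbit n (k + 1) := by
  rw [orbit, fibOrbit_add_two, map_add]
  rfl

theorem periodic_orbit : Periodic (orbit n) n := fun k => by
  rw [orbit, orbit, ← sub_eq_zero, ← map_sub, add_comm, ← fibMatrix_pow_sub_one_mulVec_fibOrbit,
    Submodule.mkQ_apply, Submodule.Quotient.mk_eq_zero]
  exact LinearMap.mem_range_self _ _

theorem orbit_val_natCast [NeZero n] (k : ℕ) : orbit n (k : ZMod n).val = orbit n k := by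
  rw [ZMod.val_natCast]
  exact (periodic_orbit n).map_mod_nat k

end FibQuotient

noncomputable section

namespace FibonacciGroup

variable (n : ℕ)

def of (i : ZMod n) : FibonacciGroup n := PresentedGroup.of i

theorem of_mul_of_add_one (i : ZMod n) : of n i * of n (i + 1) = of n (i + 2) :=
  mul_inv_eq_one.mp (PresentedGroup.one_of_mem (Set.mem_iUnion.mpr ⟨i, rfl⟩))

def gen (i : ZMod n) : Additive (Abelianization (FibonacciGroup n)) :=
  .ofMul (.of (of n i))

theorem gen_natCast_add_two (k : ℕ) :
    gen n ((k + 2 : ℕ) : ZMod n) = gen n k + gen n (k + 1 : ℕ) := by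
  push_cast
  rw [gen, gen, gen, ← of_mul_of_add_one, map_mul, ofMul_mul]

variable {n} in
theorem addHom_ext {G : Type*} [AddGroup G]
    {f g : Additive (Abelianization (FibonacciGroup n)) →+ G}
    (h : ∀ i, f (gen n i) = g (gen n i)) : f = g :=
  MonoidHom.toAdditiveLeft.symm.injective <| Abelianization.hom_ext _ _ (PresentedGroup.ext h)

def liftAdd {G : Type*} [AddCommGroup G] (g : ZMod n → G)
    (hg : ∀ i, g i + g (i + 1) = g (i + 2)) :
    Additive (Abelianization (FibonacciGroup n)) →+ G :=
  MonoidHom.toAdditiveLeft <| Abelianization.lift <|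
    PresentedGroup.toGroup (f := fun i => Multiplicative.ofAdd (g i)) <| by
      simp only [fibonacciRels, Set.mem_iUnion, Set.mem_singleton_iff]
      rintro _ ⟨i, rfl⟩
      simp [← ofAdd_add, hg]

variable {n} in
theorem liftAdd_gen {G : Type*} [AddCommGroup G] (g : ZMod n → G)
    (hg : ∀ i, g i + g (i + 1) = g (i + 2)) (i : ZMod n) :
    liftAdd n g hg (gen n i) = g i :=
  congrArg Multiplicative.toAdd <|
    (Abelianization.lift_apply_of _ _).trans (PresentedGroup.toGroup.of _)

def toQuotient [NeZero n] : Additive (Abelianization (FibonacciGroup n)) →+ FibQuotient n :=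
  liftAdd n (fun i => FibQuotient.orbit n i.val) fun i => by
    obtain ⟨k, rfl⟩ := ZMod.natCast_zmod_surjective i
    have h₁ : (k : ZMod n) + 1 = (k + 1 : ℕ) := by push_cast; rfl
    have h₂ : (k : ZMod n) + 2 = (k + 2 : ℕ) := by push_cast; rfl
    simp only [h₁, h₂, FibQuotient.orbit_val_natCast, FibQuotient.orbit_add_two]

theorem toQuotient_gen_natCast [NeZero n] (k : ℕ) :
    toQuotient n (gen n k) = FibQuotient.orbit n k := by
  rw [toQuotient, liftAdd_gen, FibQuotient.orbit_val_natCast]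

def genLin : (Fin 2 → ℤ) →ₗ[ℤ] Additive (Abelianization (FibonacciGroup n)) :=
  (Pi.basisFun ℤ (Fin 2)).constr ℤ fun j => gen n (j : ℕ)

theorem genLin_fibOrbit (k : ℕ) : genLin n (fibOrbit k) = gen n k := by
  have base (j : Fin 2) : genLin n (fibOrbit j) = gen n j := by
    rw [← basisFun_eq_fibOrbit, genLin, Module.Basis.constr_basis]
  induction k using Nat.twoStepInduction with
  | zero => exact base 0
  | one => exact base 1
  | more k ih₀ ih₁ => rw [fibOrbit_add_two, map_add, ih₀, ih₁, gen_natCast_add_two]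

theorem range_le_ker_genLin :
    LinearMap.range (fibMatrix ^ n - 1).mulVecLin ≤ LinearMap.ker (genLin n) := by
  rw [LinearMap.range_le_ker_iff]
  refine (Pi.basisFun ℤ (Fin 2)).ext fun j => ?_
  rw [LinearMap.comp_apply, mulVecLin_apply, basisFun_eq_fibOrbit,
    fibMatrix_pow_sub_one_mulVec_fibOrbit, map_sub, genLin_fibOrbit, genLin_fibOrbit,
    LinearMap.zero_apply, sub_eq_zero]
  simp

def ofQuotient : FibQuotient n →ₗ[ℤ] Additive (Abelianization (FibonacciGroup n)) :=
  Submodule.liftQ _ (genLin n) (range_le_ker_genLin n)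

theorem ofQuotient_orbit (k : ℕ) : ofQuotient n (FibQuotient.orbit n k) = gen n k :=
  genLin_fibOrbit n k

theorem ofQuotient_comp_toQuotient [NeZero n] :
    (ofQuotient n).toAddMonoidHom.comp (toQuotient n) = AddMonoidHom.id _ :=
  addHom_ext fun i => by
    obtain ⟨k, rfl⟩ := ZMod.natCast_zmod_surjective i
    simp [toQuotient_gen_natCast, ofQuotient_orbit]

theorem toQuotient_comp_ofQuotient [NeZero n] :
    (toQuotient n).comp (ofQuotient n).toAddMonoidHom = AddMonoidHom.id _ := by
  suffices (toQuotient n).toIntLinearMap ∘ₗ ofQuotient n = LinearMap.id from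
    congrArg LinearMap.toAddMonoidHom this
  refine Submodule.linearMap_qext _ ((Pi.basisFun ℤ (Fin 2)).ext fun j => ?_)
  rw [basisFun_eq_fibOrbit]
  exact (congrArg (toQuotient n) (ofQuotient_orbit n j)).trans (toQuotient_gen_natCast n j)

def abelianizationEquiv [NeZero n] :
    Additive (Abelianization (FibonacciGroup n)) ≃+ FibQuotient n :=
  AddMonoidHom.toAddEquiv _ _ (ofQuotient_comp_toQuotient n) (toQuotient_comp_ofQuotient n)

theorem natCard_abelianization [NeZero n] (h : (fibMatrix ^ n - 1).det ≠ 0) :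
    Nat.card (Abelianization (FibonacciGroup n)) = (fibMatrix ^ n - 1).det.natAbs := by
  rw [Nat.card_congr (Additive.ofMul.trans (abelianizationEquiv n).toEquiv),
    natCard_quotient_range_mulVecLin _ h]

end FibonacciGroup

end

/-- For even `n ≥ 4`, the abelianization of the Fibonacci group `F(n)` is finite of
order `f_{n-1} + f_{n+1} - 2`. -/
theorem fibonacciGroup_abelianization_card_even (n : ℕ) (hn : 4 ≤ n) (heven : Even n) :
    Finite (Abelianization (FibonacciGroup n)) ∧
      Nat.card (Abelianization (FibonacciGroup n)) = Nat.fib (n - 1) + Nat.fib (n + 1) - 2 := by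
  obtain ⟨m, rfl⟩ : ∃ m, n = m + 1 := ⟨n - 1, by omega⟩
  have : NeZero (m + 1) := ⟨m.succ_ne_zero⟩
  have hdet : (fibMatrix ^ (m + 1) - 1).det = 2 - (Nat.fib m + Nat.fib (m + 2)) := by
    rw [det_fibMatrix_pow_succ_sub_one, heven.neg_one_pow]
    ring
  have hlucas : 3 ≤ Nat.fib m + Nat.fib (m + 2) := by
    have := Nat.fib_pos.mpr (show 0 < m by omega)
    have := Nat.fib_pos.mpr (show 0 < m + 1 by omega)
    rw [Nat.fib_add_two]
    omega
  have hcard : Nat.card (Abelianization (FibonacciGroup (m + 1))) =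
      Nat.fib m + Nat.fib (m + 2) - 2 := by
    rw [FibonacciGroup.natCard_abelianization _ (by omega), hdet]
    omega
  refine ⟨Nat.finite_of_card_ne_zero (by omega), ?_⟩
  simpa using hcard
end

section
/- Every rational number p/q in lowest terms with p odd and q even (q ≠ 0) has a continued fraction expansion [2a_0, 2a_1, …, 2a_n] with all partial quotients even integers and n odd; that is, p/q = 2a_0 + 1/(2a_1 + 1/(⋯ + 1/(2a_n))). -/
/-- Evaluation of a finite continued fraction `[c_0, c_1, …]`, meaning
`c_0 + 1/(c_1 + 1/(⋯))`.  (Recall `(0 : ℚ)⁻¹ = 0`; well-definedness is imposed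
separately by requiring all intermediate denominators to be nonzero.) -/
def cfrac : List ℤ → ℚ
  | [] => 0
  | c :: t => (c : ℚ) + (cfrac t)⁻¹

lemma cf_step (x y : ℤ) (hy : y ≠ 0) (hpar : Odd (x + y)) :
    ∃ a r : ℤ, x = 2 * a * y + r ∧ |r| < |y| := by
  have hay : 0 < |y| := abs_pos.mpr hy
  have hy2 : (2 * |y|) ≠ 0 := by positivity
  set c := x / (2 * |y|) with hc
  set r0 := x % (2 * |y|) with hr0
  have h0 : 0 ≤ r0 := Int.emod_nonneg x hy2
  have h1 : r0 < 2 * |y| := Int.emod_lt_of_pos x (by positivity)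
  have hx : 2 * |y| * c + r0 = x := Int.mul_ediv_add_emod x (2 * |y|)
  have hne : r0 ≠ |y| := by
    intro h
    have : Even (x + y) := by
      rcases abs_cases y with ⟨h', _⟩ | ⟨h', _⟩
      · exact ⟨|y| * c + y, by rw [← hx, h, h']; ring⟩
      · exact ⟨|y| * c, by rw [← hx, h, h']; ring⟩
    exact (Int.not_odd_iff_even.mpr this) hpar
  obtain ⟨d, r, hdr, hrlt⟩ : ∃ d r : ℤ, x = 2 * |y| * d + r ∧ |r| < |y| := by
    rcases lt_or_ge r0 |y| with h | h
    · exact ⟨c, r0, by linarith [hx], by rwa [abs_of_nonneg h0]⟩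
    · refine ⟨c + 1, r0 - 2 * |y|, by linarith [hx], ?_⟩
      have : |y| < r0 := lt_of_le_of_ne h (Ne.symm hne)
      rw [abs_of_nonpos (by linarith)]
      linarith
  rcases abs_cases y with ⟨h', _⟩ | ⟨h', _⟩
  · exact ⟨d, r, by rw [h'] at hdr; linarith [hdr], hrlt⟩
  · exact ⟨-d, r, by rw [h'] at hdr; linarith [hdr], hrlt⟩

lemma cf_aux : ∀ n : ℕ, ∀ p q : ℤ, q.natAbs ≤ n → q ≠ 0 → IsCoprime p q → Odd p → Even q →
    ∃ a : List ℤ, a ≠ [] ∧ Even a.length ∧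
      (∀ t : List ℤ, t ≠ [] → t <:+ a.map (fun x => 2 * x) → cfrac t ≠ 0) ∧
      cfrac (a.map (fun x => 2 * x)) = (p : ℚ) / (q : ℚ) := by
  intro n
  induction n using Nat.strong_induction_on with
  | _ n IH =>
    intro p q hn hq hcop hp hqe
    have hp0 : p ≠ 0 := by rintro rfl; exact (by decide : ¬ Odd (0:ℤ)) hp
    obtain ⟨a, r, hpr, hrlt⟩ := cf_step p q hq (hp.add_even hqe)
    have hr : Odd r := by
      have : r = p - 2 * a * q := by linarith
      rw [this]; exact hp.sub_even ⟨a * q, by ring⟩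
    have hr0 : r ≠ 0 := by rintro rfl; exact (by decide : ¬ Odd (0:ℤ)) hr
    have hcqr : IsCoprime q r := by
      have : r = p + q * (-(2 * a)) := by linarith
      rw [this]
      exact (hcop.add_mul_left_left _).symm
    obtain ⟨b, s, hqs, hslt⟩ := cf_step q r hr0 (hqe.add_odd hr)
    have hse : Even s := by
      have : s = q - 2 * b * r := by linarith
      rw [this]; exact hqe.sub ⟨b * r, by ring⟩
    -- rational casts
    have hqQ : (q : ℚ) ≠ 0 := Int.cast_ne_zero.mpr hq
    have hrQ : (r : ℚ) ≠ 0 := Int.cast_ne_zero.mpr hr0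
    have hpQ : (p : ℚ) ≠ 0 := Int.cast_ne_zero.mpr hp0
    by_cases hs0 : s = 0
    · -- terminal case: list [a, b]
      have hq2br : q = 2 * b * r := by rw [hs0] at hqs; linarith
      have hb0 : b ≠ 0 := by rintro rfl; simp at hq2br; exact hq hq2br
      have hbQ : (2 * (b : ℚ)) ≠ 0 := by
        simp only [ne_eq, mul_eq_zero]
        push_neg
        exact ⟨two_ne_zero, Int.cast_ne_zero.mpr hb0⟩
      have hval : cfrac ([a, b].map (fun x => 2 * x)) = (p : ℚ) / q := by
        have key : (p : ℤ) * (2 * b) = (2 * a * (2 * b) + 1) * q := by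
          linear_combination (2 * b) * hpr - hq2br
        have keyQ : (p : ℚ) * (2 * b) = (2 * a * (2 * b) + 1) * q := by exact_mod_cast key
        simp only [List.map_cons, List.map_nil, cfrac]
        push_cast
        rw [inv_zero, add_zero]
        field_simp
        linarith [keyQ]
      refine ⟨[a, b], by simp, by simp, ?_, hval⟩
      intro t ht hsuf
      simp only [List.map_cons, List.map_nil] at hval hsuf
      rcases List.suffix_cons_iff.mp hsuf with h | h
      · rw [h, hval]; exact div_ne_zero hpQ hqQ
      rcases List.suffix_cons_iff.mp h with h | h
      · rw [h]
        simp only [cfrac]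
        rw [inv_zero, add_zero]
        push_cast
        exact hbQ
      · exact absurd (List.suffix_nil.mp h) ht
    · -- recursive case
      have hcrs : IsCoprime r s := by
        have : s = q + r * (-(2 * b)) := by linarith
        rw [this]
        exact (hcqr.add_mul_left_left _).symm
      have hlt : s.natAbs < n := by
        have h1 : (s.natAbs : ℤ) < r.natAbs := by
          rwa [← Int.abs_eq_natAbs, ← Int.abs_eq_natAbs]
        have h2 : (r.natAbs : ℤ) < q.natAbs := by
          rwa [← Int.abs_eq_natAbs, ← Int.abs_eq_natAbs]
        have := hn
        omega
      obtain ⟨L, hL1, hL2, hL3, hL4⟩ :=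
        IH s.natAbs hlt r s le_rfl hs0 hcrs hr hse
      have hsQ : (s : ℚ) ≠ 0 := Int.cast_ne_zero.mpr hs0
      have hqsQ : (q : ℚ) = 2 * b * r + s := by exact_mod_cast hqs
      have hprQ : (p : ℚ) = 2 * a * q + r := by exact_mod_cast hpr
      have hc2 : cfrac ((b :: L).map (fun x => 2 * x)) = (q : ℚ) / r := by
        simp only [List.map_cons, cfrac, hL4]
        push_cast
        rw [inv_div, hqsQ]
        field_simp
      have hc1 : cfrac ((a :: b :: L).map (fun x => 2 * x)) = (p : ℚ) / q := by
        simp only [List.map_cons, cfrac]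
        rw [hL4]
        push_cast
        rw [inv_div]
        have h2 : 2 * (b : ℚ) + (s : ℚ) / r = (q : ℚ) / r := by
          rw [hqsQ]; field_simp
        rw [h2, inv_div, hprQ]
        field_simp
      refine ⟨a :: b :: L, by simp, ?_, ?_, hc1⟩
      · obtain ⟨k, hk⟩ := hL2
        exact ⟨k + 1, by simp [hk]; omega⟩
      · intro t ht hsuf
        simp only [List.map_cons] at hsuf
        rcases List.suffix_cons_iff.mp hsuf with h | h
        · rw [h]
          have : cfrac ((fun x => 2 * x) a :: (fun x => 2 * x) b :: L.map (fun x => 2 * x))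
              = (p : ℚ) / q := by simpa using hc1
          rw [this]
          exact div_ne_zero hpQ hqQ
        rcases List.suffix_cons_iff.mp h with h | h
        · rw [h]
          have : cfrac ((fun x => 2 * x) b :: L.map (fun x => 2 * x)) = (q : ℚ) / r := by
            simpa using hc2
          rw [this]
          exact div_ne_zero hqQ hrQ
        · exact hL3 t ht h

/-- Every rational `p/q` in lowest terms with `p` odd and `q ≠ 0` even has a continued
fraction expansion `[2a_0, 2a_1, …, 2a_n]` with all entries even and `n` odd (i.e. an
even number of entries), all of whose intermediate denominators are nonzero. -/
theorem exists_even_continued_fraction (p q : ℤ) (hq : q ≠ 0) (hcop : IsCoprime p q)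
    (hp : Odd p) (hqe : Even q) :
    ∃ a : List ℤ, a ≠ [] ∧ Even a.length ∧
      (∀ t : List ℤ, t ≠ [] → t ≠ a.map (fun x => 2 * x) →
        t <:+ a.map (fun x => 2 * x) → cfrac t ≠ 0) ∧
      cfrac (a.map (fun x => 2 * x)) = (p : ℚ) / (q : ℚ) := by
  obtain ⟨a, h1, h2, h3, h4⟩ := cf_aux q.natAbs p q le_rfl hq hcop hp hqe
  exact ⟨a, h1, h2, fun t ht _ hsuf => h3 t ht hsuf, h4⟩
end

section
/- For p(t) = 1 - t + t^2 and any n ≥ 1, |∏_{ω^n = 1} p(ω)| depends only on n mod 6: it equals 0 if n ≡ 0 mod 6, 1 if n ≡ ±1 mod 6, 3 if n ≡ ±2 mod 6, and 4 if n ≡ 3 mod 6, where the product is over complex n-th roots of unity. -/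
/-!
Write `1 - t + t² = (a - t)(b - t)`, so `a + b = ab = 1` (`a`, `b` are the primitive sixth roots
of unity). Since `∏_{ωⁿ=1} (c - ω) = cⁿ - 1`, the product equals `xₙ = (aⁿ - 1)(bⁿ - 1)`.
From `a³ = b³ = -1` and `(ab)ⁿ = 1` one gets `xₙ₊₃ = 4 - xₙ`, and `x₀, x₁, x₂ = 0, 1, 3`.
-/

open Polynomial

theorem Polynomial.prod_map_sub_nthRoots {K : Type*} [Field K] [IsAlgClosed K] {n : ℕ}
    (hn : n ≠ 0) (a c : K) : ((nthRoots n a).map (c - ·)).prod = c ^ n - a := by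
  rw [nthRoots, ← (IsAlgClosed.splits _).eval_eq_prod_roots_of_monic (monic_X_pow_sub_C a hn)]
  simp

theorem IsAlgClosed.exists_add_eq_one_and_mul_eq_one (K : Type*) [Field K] [IsAlgClosed K] :
    ∃ a b : K, a + b = 1 ∧ a * b = 1 := by
  obtain ⟨a, ha⟩ := IsAlgClosed.exists_root (X ^ 2 - X + 1 : K[X])
    (by rw [show (X ^ 2 - X + 1 : K[X]).degree = 2 by compute_degree!]; decide)
  refine ⟨a, 1 - a, add_sub_cancel a 1, ?_⟩
  simp only [IsRoot, eval_add, eval_sub, eval_pow, eval_X, eval_one] at ha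
  linear_combination -ha

namespace Trefoil

variable {R : Type*} [CommRing R] {a b : R}

def cyclicProd (a b : R) (n : ℕ) : R := (a ^ n - 1) * (b ^ n - 1)

theorem pow_three_eq_neg_one (hsum : a + b = 1) (hprod : a * b = 1) : a ^ 3 = -1 := by
  linear_combination (a + 1) * (a * hsum - hprod)

theorem cyclicProd_add_three (hsum : a + b = 1) (hprod : a * b = 1) (n : ℕ) :
    cyclicProd a b (n + 3) = 4 - cyclicProd a b n := by
  have hpow : a ^ n * b ^ n = 1 := by rw [← mul_pow, hprod, one_pow]
  have hb : b ^ 3 = -1 :=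
    pow_three_eq_neg_one (by rwa [add_comm]) (by rwa [mul_comm])
  rw [cyclicProd, cyclicProd, pow_add, pow_add, pow_three_eq_neg_one hsum hprod, hb]
  linear_combination 2 * hpow

theorem cyclicProd_periodic (hsum : a + b = 1) (hprod : a * b = 1) :
    Function.Periodic (cyclicProd a b) 6 := fun n => by
  rw [show n + 6 = n + 3 + 3 from rfl, cyclicProd_add_three hsum hprod,
    cyclicProd_add_three hsum hprod, sub_sub_cancel]

theorem cyclicProd_zero : cyclicProd a b 0 = 0 := by
  simp [cyclicProd]

theorem cyclicProd_one (hsum : a + b = 1) (hprod : a * b = 1) : cyclicProd a b 1 = 1 := by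
  rw [cyclicProd]
  linear_combination hprod - hsum

theorem cyclicProd_two (hsum : a + b = 1) (hprod : a * b = 1) : cyclicProd a b 2 = 3 := by
  rw [cyclicProd]
  linear_combination (a * b + 3) * hprod - (a + b + 1) * hsum

theorem prod_map_nthRoots_eq_cyclicProd {K : Type*} [Field K] [IsAlgClosed K] {a b : K}
    (hsum : a + b = 1) (hprod : a * b = 1) {n : ℕ} (hn : n ≠ 0) :
    ((nthRoots n (1 : K)).map fun ω => 1 - ω + ω ^ 2).prod = cyclicProd a b n := by
  have hfactor (ω : K) : 1 - ω + ω ^ 2 = (a - ω) * (b - ω) := by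
    linear_combination ω * hsum - hprod
  simp only [hfactor, Multiset.prod_map_mul, prod_map_sub_nthRoots hn]
  rfl

end Trefoil

open Trefoil in
/-- For `p(t) = 1 - t + t²`, the absolute value of `∏_{ωⁿ=1} p(ω)` depends only on
`n mod 6`: it is `0, 1, 3, 4` according as `n ≡ 0, ±1, ±2, 3 mod 6`. -/
theorem trefoil_homology_orders (n : ℕ) (hn : 1 ≤ n) :
    (n % 6 = 0 →
      ‖((Polynomial.nthRoots n (1 : ℂ)).map fun ω => 1 - ω + ω ^ 2).prod‖ = 0) ∧
    ((n % 6 = 1 ∨ n % 6 = 5) →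
      ‖((Polynomial.nthRoots n (1 : ℂ)).map fun ω => 1 - ω + ω ^ 2).prod‖ = 1) ∧
    ((n % 6 = 2 ∨ n % 6 = 4) →
      ‖((Polynomial.nthRoots n (1 : ℂ)).map fun ω => 1 - ω + ω ^ 2).prod‖ = 3) ∧
    (n % 6 = 3 →
      ‖((Polynomial.nthRoots n (1 : ℂ)).map fun ω => 1 - ω + ω ^ 2).prod‖ = 4) := by
  obtain ⟨a, b, hsum, hprod⟩ := IsAlgClosed.exists_add_eq_one_and_mul_eq_one ℂ
  rw [prod_map_nthRoots_eq_cyclicProd hsum hprod (by omega),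
    ← (cyclicProd_periodic hsum hprod).map_mod_nat]
  have h0 : cyclicProd a b 0 = 0 := cyclicProd_zero
  have h1 := cyclicProd_one hsum hprod
  have h2 := cyclicProd_two hsum hprod
  have h3 : cyclicProd a b 3 = 4 := by
    rw [cyclicProd_add_three hsum hprod 0, h0]; norm_num
  have h4 : cyclicProd a b 4 = 3 := by
    rw [cyclicProd_add_three hsum hprod 1, h1]; norm_num
  have h5 : cyclicProd a b 5 = 1 := by
    rw [cyclicProd_add_three hsum hprod 2, h2]; norm_num
  refine ⟨fun h => ?_, fun h => ?_, fun h => ?_, fun h => ?_⟩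
  · simp [h, h0]
  · rcases h with h | h <;> simp [h, h1, h5]
  · rcases h with h | h <;> simp [h, h2, h4]
  · simp [h, h3]
end

section
/- For the Fibonacci polynomial p(t) = t^2 - t - 1, the absolute value of ∏_{ω^{2n} = 1} p(ω) over all complex 2n-th roots of unity equals f_{2n-1} + f_{2n+1} - 2, where f is the Fibonacci sequence. -/
/-!
Over `ℂ`, `t² - t - 1 = (φ - t)(ψ - t)` with `φ, ψ` the golden ratio and its conjugate, and
`∏_{ωᵐ = 1} (x - ω) = xᵐ - 1`. Hence the product is `(φ²ⁿ - 1)(ψ²ⁿ - 1) = 2 - (φ²ⁿ + ψ²ⁿ)`,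
since `φψ = -1`, and the Lucas number `φᵏ⁺¹ + ψᵏ⁺¹ = f_k + f_{k+2}` is at least `2`.
-/

open Polynomial Real
open scoped goldenRatio

theorem Polynomial.prod_nthRoots_map_sub {K : Type*} [Field K] [IsAlgClosed K] {n : ℕ}
    (hn : n ≠ 0) (a x : K) : ((nthRoots n a).map (x - ·)).prod = x ^ n - a := by
  rw [nthRoots, ← (IsAlgClosed.splits _).eval_eq_prod_roots_of_monic (monic_X_pow_sub_C a hn)]
  simp

theorem Real.goldenRatio_pow_add_goldenConj_pow (m : ℕ) :
    φ ^ (m + 1) + ψ ^ (m + 1) = Nat.fib m + Nat.fib (m + 2) := by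
  rw [← goldenRatio_mul_fib_succ_add_fib, ← goldenConj_mul_fib_succ_add_fib, Nat.fib_add_two]
  push_cast
  linear_combination (Nat.fib (m + 1) : ℝ) * goldenRatio_add_goldenConj

theorem Complex.sq_sub_sub_one_eq_goldenRatio_sub_mul_goldenConj_sub (z : ℂ) :
    z ^ 2 - z - 1 = (φ - z) * (ψ - z) := by
  have hsum : (φ + ψ : ℂ) = 1 := by exact_mod_cast goldenRatio_add_goldenConj
  have hmul : (φ * ψ : ℂ) = -1 := by exact_mod_cast goldenRatio_mul_goldenConj
  linear_combination z * hsum - hmul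

theorem prod_nthRoots_one_map_sq_sub_sub_one {m : ℕ} (hm : m ≠ 0) :
    ((nthRoots m (1 : ℂ)).map fun ω => ω ^ 2 - ω - 1).prod =
      (((φ ^ m - 1) * (ψ ^ m - 1) : ℝ) : ℂ) := by
  simp_rw [Complex.sq_sub_sub_one_eq_goldenRatio_sub_mul_goldenConj_sub, Multiset.prod_map_mul,
    prod_nthRoots_map_sub hm]
  push_cast
  ring

theorem Real.goldenRatio_pow_sub_one_mul_goldenConj_pow_sub_one (m : ℕ) :
    (φ ^ (m + 1) - 1) * (ψ ^ (m + 1) - 1) =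
      (-1) ^ (m + 1) + 1 - (Nat.fib m + Nat.fib (m + 2)) := by
  have expand (a b : ℝ) : (a ^ (m + 1) - 1) * (b ^ (m + 1) - 1) =
      (a * b) ^ (m + 1) + 1 - (a ^ (m + 1) + b ^ (m + 1)) := by
    ring
  rw [expand, goldenRatio_mul_goldenConj, goldenRatio_pow_add_goldenConj_pow]

/-- For `p(t) = t² - t - 1`, the absolute value of the product of `p` over all complex
`2n`-th roots of unity equals `f_{2n-1} + f_{2n+1} - 2`. -/
theorem figureEight_homology_order (n : ℕ) (hn : 1 ≤ n) :
    ‖((Polynomial.nthRoots (2 * n) (1 : ℂ)).map fun ω => ω ^ 2 - ω - 1).prod‖ =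
      Nat.fib (2 * n - 1) + Nat.fib (2 * n + 1) - 2 := by
  obtain ⟨k, hk⟩ : ∃ k, 2 * n = k + 1 := ⟨2 * n - 1, by omega⟩
  have hsign : (-1 : ℝ) ^ (k + 1) = 1 := hk ▸ (even_two_mul n).neg_one_pow
  have hfib : (1 : ℝ) ≤ Nat.fib k := by exact_mod_cast Nat.fib_pos.mpr (by omega)
  have hfib' : (1 : ℝ) ≤ Nat.fib (k + 2) := by exact_mod_cast Nat.fib_pos.mpr (by omega)
  rw [prod_nthRoots_one_map_sq_sub_sub_one (by omega), Complex.norm_real, Real.norm_eq_abs, hk,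
    goldenRatio_pow_sub_one_mul_goldenConj_pow_sub_one, hsign, abs_of_nonpos (by linarith),
    Nat.add_sub_cancel]
  ring
end
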